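/- arXiv:2508.00944 — 6 statements merged into one kernel-verified Lean document; each statement's English description precedes it below -/
import Mathlib

section
/- Let (a_k)_{k≥1} be any sequence of positive integers. Then there exist a real number ε > 0 and a strictly increasing sequence (ℓ_n)_{n≥1} of natural numbers, all of the same parity (all even or all odd), such that for every n ≥ 1 and every natural number m ≤ ℓ_n one has a_{ℓ_n + 1} ≥ ε·(a_{m+1} + 2). -/
/-- For any sequence `(a_k)_{k≥1}` of positive integers there exist `ε > 0`
and a strictly increasing sequence `(ℓ_n)` of natural numbers, all of the same parity,
such that `a_{ℓ_n+1} ≥ ε·(a_{m+1} + 2)` for all `n` and all `m ≤ ℓ_n`. -/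
theorem stmt_2 (a : ℕ → ℕ) (ha : ∀ k, 1 ≤ k → 0 < a k) :
    ∃ (ε : ℝ) (l : ℕ → ℕ), 0 < ε ∧ StrictMono l ∧
      ((∀ n, Even (l n)) ∨ (∀ n, Odd (l n))) ∧
      ∀ n, ∀ m ≤ l n, (a (l n + 1) : ℝ) ≥ ε * ((a (m + 1) : ℝ) + 2) := by
  set b : ℕ → ℕ := fun m => a (m + 1) with hb
  by_cases hbd : ∃ M : ℕ, ∀ m, b m ≤ M
  · -- bounded case
    obtain ⟨M, hM⟩ := hbd
    refine ⟨1 / (M + 2 : ℝ), fun n => 2 * n, by positivity, fun i j hij => by dsimp only; omega,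
      Or.inl (fun n => ⟨n, by ring⟩), fun n m hm => ?_⟩
    have h1 : (1 : ℕ) ≤ a (2 * n + 1) := ha _ (by omega)
    have h2 : (b m : ℝ) ≤ M := by exact_mod_cast hM m
    have hM2 : (0 : ℝ) < M + 2 := by positivity
    rw [ge_iff_le, div_mul_eq_mul_div, div_le_iff₀ hM2]
    have h3 : (a (2 * n + 1) : ℝ) ≥ 1 := by exact_mod_cast h1
    have h4 : (b m : ℝ) = (a (m + 1) : ℝ) := rfl
    nlinarith [h2, h3]
  · -- unbounded case: record indices
    push_neg at hbd
    have hRinf : {l : ℕ | ∀ m ≤ l, b m ≤ b l}.Infinite := by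
      apply Set.infinite_of_not_bddAbove
      rintro ⟨N, hN⟩
      obtain ⟨k, hk⟩ := hbd ((Finset.range (N + 1)).sup b)
      have hex : ∃ k, (Finset.range (N + 1)).sup b < b k := ⟨k, hk⟩
      set j := Nat.find hex with hj
      have hjspec : (Finset.range (N + 1)).sup b < b j := Nat.find_spec hex
      have hjN : N < j := by
        by_contra h
        push_neg at h
        exact absurd hjspec (not_lt.mpr (Finset.le_sup (Finset.mem_range.mpr (by omega))))
      have hjrec : j ∈ {l : ℕ | ∀ m ≤ l, b m ≤ b l} := by
        intro m hm
        rcases eq_or_lt_of_le hm with rfl | hm'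
        · exact le_rfl
        by_cases hmN : m ≤ N
        · exact le_of_lt (lt_of_le_of_lt (Finset.le_sup (Finset.mem_range.mpr (by omega))) hjspec)
        · have := Nat.find_min hex hm'
          push_neg at this
          exact le_trans this (le_of_lt hjspec)
      exact absurd (hN hjrec) (not_le.mpr hjN)
    -- split by parity
    have hsplit : ({l : ℕ | ∀ m ≤ l, b m ≤ b l} ∩ {n | Even n}).Infinite ∨
        ({l : ℕ | ∀ m ≤ l, b m ≤ b l} ∩ {n | Odd n}).Infinite := by
      rw [← Set.infinite_union]
      apply hRinf.mono
      intro x hx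
      rcases Nat.even_or_odd x with h | h
      · exact Or.inl ⟨hx, h⟩
      · exact Or.inr ⟨hx, h⟩
    have key : ∀ S : Set ℕ, S.Infinite → S ⊆ {l : ℕ | ∀ m ≤ l, b m ≤ b l} →
        ∃ l : ℕ → ℕ, StrictMono l ∧ (∀ n, l n ∈ S) ∧
          ∀ n, ∀ m ≤ l n, (a (l n + 1) : ℝ) ≥ (1/3 : ℝ) * ((a (m + 1) : ℝ) + 2) := by
      intro S hS hSR
      refine ⟨Nat.nth (· ∈ S), Nat.nth_strictMono hS, fun n => Nat.nth_mem_of_infinite hS n, ?_⟩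
      intro n m hm
      have hmem := Nat.nth_mem_of_infinite hS n
      have hrec := hSR hmem
      have h1 : b m ≤ b (Nat.nth (· ∈ S) n) := hrec m hm
      have h2 : 1 ≤ b (Nat.nth (· ∈ S) n) := ha _ (by omega)
      have h1' : (a (m + 1) : ℝ) ≤ (a (Nat.nth (· ∈ S) n + 1) : ℝ) := by exact_mod_cast h1
      have h2' : (1 : ℝ) ≤ (a (Nat.nth (· ∈ S) n + 1) : ℝ) := by exact_mod_cast h2
      linarith
    rcases hsplit with h | h
    · obtain ⟨l, hmono, hmem, hineq⟩ := key _ h (fun x hx => hx.1)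
      exact ⟨1/3, l, by norm_num, hmono, Or.inl (fun n => (hmem n).2), hineq⟩
    · obtain ⟨l, hmono, hmem, hineq⟩ := key _ h (fun x hx => hx.1)
      exact ⟨1/3, l, by norm_num, hmono, Or.inr (fun n => (hmem n).2), hineq⟩
end

section
/- Let θ ∈ (0,1) be irrational with continued fraction expansion θ = [0; a_1, a_2, a_3, …] and convergents p_k/q_k. Suppose (ℓ_n)_{n≥1} is a strictly increasing sequence of natural numbers and ε > 0 is such that a_{ℓ_n + 1} ≥ ε·(a_{m+1} + 2) for every n and every m ≤ ℓ_n, and set r_n := q_{ℓ_n}. Then for every n, every real c > 0, and every integer q with 1 ≤ q < r_n: if ‖q·θ‖ < c·‖r_n·θ‖ then q ≥ (ε/c)·r_n. -/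
/-!
For `q m ≤ k < q (m + 1)` the best approximation property gives `‖kθ‖ ≥ |q m θ - p m|`, and
the identity `q (m + 1) |q m θ - p m| + q m |q (m + 1) θ - p (m + 1)| = 1` turns this into
`‖kθ‖ > 1 / ((a (m + 1) + 2) k)`. The same identity at `L = ℓ n` gives
`‖q L θ‖ < 1 / q (L + 1) ≤ 1 / (a (L + 1) q L)`. Hence `‖kθ‖ < c ‖q L θ‖` forces
`a (L + 1) q L < c (a (m + 1) + 2) k`, and `a (L + 1) ≥ ε (a (m + 1) + 2)` gives `ε q L < c k`.
-/

open Set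

structure IsConvergentSeq (a : ℕ → ℕ) (p q : ℕ → ℤ) : Prop where
  p_zero : p 0 = 0
  p_one : p 1 = 1
  q_zero : q 0 = 1
  q_one : q 1 = a 1
  p_add_two : ∀ k, p (k + 2) = a (k + 2) * p (k + 1) + p k
  q_add_two : ∀ k, q (k + 2) = a (k + 2) * q (k + 1) + q k

structure IsGaussOrbit (θ : ℝ) (a : ℕ → ℕ) (x : ℕ → ℝ) : Prop where
  x_zero : x 0 = θ
  a_succ : ∀ k, (a (k + 1) : ℤ) = ⌊1 / x k⌋
  x_succ : ∀ k, x (k + 1) = Int.fract (1 / x k)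

/-- The sign `(-1) ^ k` makes this equal to `|q k * θ - p k|` for the convergents of `θ`. -/
def convergentError (θ : ℝ) (p q : ℕ → ℤ) (k : ℕ) : ℝ := (-1) ^ k * (q k * θ - p k)

theorem q_mul_sub_p_eq (θ : ℝ) (p q : ℕ → ℤ) (k : ℕ) :
    q k * θ - p k = (-1) ^ k * convergentError θ p q k := by
  rw [convergentError, ← mul_assoc, ← mul_pow]
  norm_num

theorem exists_le_lt_succ {α : Type*} [LinearOrder α] (f : ℕ → α) {y : α} (h0 : f 0 ≤ y) :
    ∀ {L : ℕ}, y < f L → ∃ m < L, f m ≤ y ∧ y < f (m + 1)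
  | 0, hL => absurd h0 (not_le.2 hL)
  | L + 1, hL => by
    by_cases hy : f L ≤ y
    · exact ⟨L, L.lt_succ_self, hy, hL⟩
    · obtain ⟨m, hmL, hm⟩ := exists_le_lt_succ f h0 (not_le.1 hy)
      exact ⟨m, hmL.trans L.lt_succ_self, hm⟩

/-- The constraints force either `β ≤ 0 < α` or `α < 0 < β`. -/
theorem le_abs_mul_sub_mul {α β Q Q' j : ℤ} {A B : ℝ} (hQ : 0 ≤ Q) (hj : 1 ≤ j)
    (hjQ' : j < Q') (hsum : α * Q + β * Q' = j) (hA : 0 ≤ A) (hB : 0 ≤ B) :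
    A ≤ |α * A - β * B| := by
  rcases le_or_gt β 0 with hβ | hβ
  · have hα : (1 : ℝ) ≤ α := by exact_mod_cast (show 1 ≤ α by nlinarith)
    have hβ' : (β : ℝ) ≤ 0 := by exact_mod_cast hβ
    exact le_trans (by nlinarith) (le_abs_self _)
  · have hα : (α : ℝ) ≤ -1 := by exact_mod_cast (show α ≤ -1 by nlinarith)
    have hβ' : (0 : ℝ) ≤ β := by exact_mod_cast hβ.le
    exact le_trans (by nlinarith) (neg_le_abs _)

namespace IsConvergentSeq

variable {a : ℕ → ℕ} {p q : ℕ → ℤ}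

theorem q_mul_p_succ_sub (h : IsConvergentSeq a p q) (k : ℕ) :
    q k * p (k + 1) - q (k + 1) * p k = (-1) ^ k := by
  induction k with
  | zero => simp [h.p_zero, h.p_one, h.q_zero]
  | succ k ih =>
    rw [h.p_add_two, h.q_add_two, pow_succ]
    linear_combination -ih

theorem convergentError_add_two (h : IsConvergentSeq a p q) (θ : ℝ) (k : ℕ) :
    convergentError θ p q (k + 2) =
      convergentError θ p q k - a (k + 2) * convergentError θ p q (k + 1) := by
  simp only [convergentError, h.p_add_two, h.q_add_two, pow_succ]
  push_cast
  ring

theorem q_succ_mul_convergentError_add (h : IsConvergentSeq a p q) (θ : ℝ) (k : ℕ) :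
    q (k + 1) * convergentError θ p q k + q k * convergentError θ p q (k + 1) = 1 := by
  induction k with
  | zero => simp [convergentError, h.p_zero, h.p_one, h.q_zero, h.q_one]
  | succ k ih =>
    rw [h.convergentError_add_two, h.q_add_two]
    push_cast
    linear_combination ih

theorem q_nonneg (h : IsConvergentSeq a p q) (k : ℕ) : 0 ≤ q k := by
  induction k using Nat.twoStepInduction with
  | zero => simp [h.q_zero]
  | one => simp [h.q_one]
  | more k hk hk1 => rw [h.q_add_two]; positivity

theorem q_le_q_succ (h : IsConvergentSeq a p q) (ha : ∀ k, 1 ≤ a (k + 1)) (k : ℕ) :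
    q k ≤ q (k + 1) := by
  cases k with
  | zero => rw [h.q_zero, h.q_one]; exact_mod_cast ha 0
  | succ k =>
    have ha' : (1 : ℤ) ≤ a (k + 2) := by exact_mod_cast ha (k + 1)
    rw [h.q_add_two]
    nlinarith [h.q_nonneg k, h.q_nonneg (k + 1)]

theorem one_le_q (h : IsConvergentSeq a p q) (ha : ∀ k, 1 ≤ a (k + 1)) (k : ℕ) : 1 ≤ q k :=
  h.q_zero ▸ monotone_nat_of_le_succ (h.q_le_q_succ ha) (Nat.zero_le k)

theorem q_succ_le (h : IsConvergentSeq a p q) (ha : ∀ k, 1 ≤ a (k + 1)) (k : ℕ) :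
    q (k + 1) ≤ (a (k + 1) + 1) * q k := by
  cases k with
  | zero => simp [h.q_zero, h.q_one]
  | succ k => rw [h.q_add_two]; linarith [h.q_le_q_succ ha k]

theorem a_mul_q_le_q_succ (h : IsConvergentSeq a p q) (k : ℕ) :
    a (k + 1) * q k ≤ q (k + 1) := by
  cases k with
  | zero => simp [h.q_zero, h.q_one]
  | succ k => rw [h.q_add_two]; linarith [h.q_nonneg k]

theorem convergentError_le_abs_sub (h : IsConvergentSeq a p q) {θ : ℝ} {m : ℕ}
    (hE : 0 ≤ convergentError θ p q m) (hE' : 0 ≤ convergentError θ p q (m + 1)) {j z : ℤ}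
    (hj : 1 ≤ j) (hj' : j < q (m + 1)) : convergentError θ p q m ≤ |j * θ - z| := by
  set s : ℤ := (-1) ^ m
  have hdet : q m * p (m + 1) - q (m + 1) * p m = s := h.q_mul_p_succ_sub m
  have hss : s * s = 1 := by rw [← pow_add, ← two_mul, pow_mul]; norm_num
  -- `(q m, q (m + 1); p m, p (m + 1))` is unimodular, so `(j, z)` is an integer combination
  set α : ℤ := s * (j * p (m + 1) - z * q (m + 1))
  set β : ℤ := s * (z * q m - j * p m)
  have hj_eq : α * q m + β * q (m + 1) = j := by linear_combination (s * j) * hdet + j * hss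
  have hz_eq : α * p m + β * p (m + 1) = z := by linear_combination (s * z) * hdet + z * hss
  have hsub : (j * θ - z : ℝ) =
      (-1) ^ m * (α * convergentError θ p q m - β * convergentError θ p q (m + 1)) := by
    rw [← hj_eq, ← hz_eq]
    push_cast
    linear_combination α * q_mul_sub_p_eq θ p q m + β * q_mul_sub_p_eq θ p q (m + 1)
  rw [hsub, abs_mul, abs_neg_one_pow, one_mul]
  exact le_abs_mul_sub_mul (h.q_nonneg m) hj hj' hj_eq hE hE'

end IsConvergentSeq

namespace IsGaussOrbit

variable {θ : ℝ} {a : ℕ → ℕ} {x : ℕ → ℝ}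

theorem irrational (h : IsGaussOrbit θ a x) (hθ : Irrational θ) (k : ℕ) :
    Irrational (x k) := by
  induction k with
  | zero => rwa [h.x_zero]
  | succ k ih =>
    rw [h.x_succ, Int.fract, one_div]
    exact ih.inv.sub_intCast _

theorem mem_Ioo (h : IsGaussOrbit θ a x) (hθ : θ ∈ Ioo 0 1) (hirr : Irrational θ) (k : ℕ) :
    x k ∈ Ioo 0 1 := by
  cases k with
  | zero => rwa [h.x_zero]
  | succ k =>
    rw [h.x_succ]
    refine ⟨(Int.fract_nonneg _).lt_of_ne ?_, Int.fract_lt_one _⟩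
    rw [← h.x_succ]
    exact (h.irrational hirr (k + 1)).ne_zero.symm

theorem one_le_a (h : IsGaussOrbit θ a x) (hθ : θ ∈ Ioo 0 1) (hirr : Irrational θ) (k : ℕ) :
    1 ≤ a (k + 1) := by
  obtain ⟨hx0, hx1⟩ := h.mem_Ioo hθ hirr k
  have : (1 : ℤ) ≤ a (k + 1) := by
    rw [h.a_succ, Int.le_floor, Int.cast_one, le_div_iff₀ hx0, one_mul]
    exact hx1.le
  exact_mod_cast this

theorem x_succ_eq (h : IsGaussOrbit θ a x) (k : ℕ) : x (k + 1) = 1 / x k - a (k + 1) := by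
  rw [h.x_succ, Int.fract, ← h.a_succ]
  push_cast
  ring

variable {p q : ℕ → ℤ}

theorem convergentError_succ (h : IsGaussOrbit θ a x) (hc : IsConvergentSeq a p q)
    (hx : ∀ k, x k ≠ 0) (k : ℕ) :
    convergentError θ p q (k + 1) = x (k + 1) * convergentError θ p q k := by
  induction k with
  | zero =>
    have hθ : θ ≠ 0 := h.x_zero ▸ hx 0
    simp only [convergentError, h.x_succ_eq, h.x_zero, hc.p_zero, hc.p_one, hc.q_zero, hc.q_one]
    push_cast
    field_simp
    ring
  | succ k ih =>
    have hk : convergentError θ p q k = convergentError θ p q (k + 1) / x (k + 1) := by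
      rw [ih]; field_simp [hx (k + 1)]
    rw [hc.convergentError_add_two, h.x_succ_eq (k + 1), hk]
    field_simp [hx (k + 1)]

theorem convergentError_pos (h : IsGaussOrbit θ a x) (hc : IsConvergentSeq a p q)
    (hθ : θ ∈ Ioo 0 1) (hirr : Irrational θ) (k : ℕ) : 0 < convergentError θ p q k := by
  induction k with
  | zero => simpa [convergentError, hc.p_zero, hc.q_zero] using hθ.1
  | succ k ih =>
    rw [h.convergentError_succ hc fun i ↦ (h.mem_Ioo hθ hirr i).1.ne']
    exact mul_pos (h.mem_Ioo hθ hirr (k + 1)).1 ih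

theorem convergentError_succ_lt (h : IsGaussOrbit θ a x) (hc : IsConvergentSeq a p q)
    (hθ : θ ∈ Ioo 0 1) (hirr : Irrational θ) (k : ℕ) :
    convergentError θ p q (k + 1) < convergentError θ p q k := by
  rw [h.convergentError_succ hc fun i ↦ (h.mem_Ioo hθ hirr i).1.ne']
  exact mul_lt_of_lt_one_left (h.convergentError_pos hc hθ hirr k) (h.mem_Ioo hθ hirr (k + 1)).2

theorem one_lt_mul_abs_sub_round (h : IsGaussOrbit θ a x) (hc : IsConvergentSeq a p q)
    (hθ : θ ∈ Ioo 0 1) (hirr : Irrational θ) {m : ℕ} {k : ℤ} (hmk : q m ≤ k)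
    (hkm : k < q (m + 1)) : 1 < (a (m + 1) + 2) * k * |k * θ - round (k * θ)| := by
  set E := convergentError θ p q
  have ha := h.one_le_a hθ hirr
  have hq : (q (m + 1) : ℝ) ≤ (a (m + 1) + 1) * q m := by exact_mod_cast hc.q_succ_le ha m
  have hqm : (0 : ℝ) < q m := by exact_mod_cast hc.one_le_q ha m
  have hmk' : (q m : ℝ) ≤ k := by exact_mod_cast hmk
  have hEm := h.convergentError_pos hc hθ hirr m
  have hbest : E m ≤ |k * θ - round (k * θ)| :=
    hc.convergentError_le_abs_sub hEm.le (h.convergentError_pos hc hθ hirr (m + 1)).le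
      ((hc.one_le_q ha m).trans hmk) hkm
  calc (1 : ℝ) = q (m + 1) * E m + q m * E (m + 1) :=
        (hc.q_succ_mul_convergentError_add θ m).symm
    _ < q (m + 1) * E m + q m * E m := by
        gcongr; exact h.convergentError_succ_lt hc hθ hirr m
    _ ≤ (a (m + 1) + 2) * q m * E m := by nlinarith
    _ ≤ (a (m + 1) + 2) * k * |k * θ - round (k * θ)| := by
        gcongr
        exact mul_nonneg (by positivity) (hqm.le.trans hmk')

theorem a_mul_q_mul_abs_sub_round_lt (h : IsGaussOrbit θ a x) (hc : IsConvergentSeq a p q)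
    (hθ : θ ∈ Ioo 0 1) (hirr : Irrational θ) (L : ℕ) :
    a (L + 1) * q L * |q L * θ - round (q L * θ : ℝ)| < 1 := by
  set E := convergentError θ p q
  have hEL := h.convergentError_pos hc hθ hirr L
  have hq : (a (L + 1) * q L : ℝ) ≤ q (L + 1) := by exact_mod_cast hc.a_mul_q_le_q_succ L
  have hround : |q L * θ - round (q L * θ : ℝ)| ≤ E L := by
    calc |q L * θ - round (q L * θ : ℝ)| ≤ |q L * θ - p L| := round_le _ _
      _ = E L := by rw [q_mul_sub_p_eq, abs_mul, abs_neg_one_pow, one_mul, abs_of_pos hEL]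
  have hqL : (0 : ℝ) < q L := by exact_mod_cast hc.one_le_q (h.one_le_a hθ hirr) L
  calc (a (L + 1) * q L : ℝ) * |q L * θ - round (q L * θ : ℝ)| ≤ q (L + 1) * E L := by
        gcongr; exact_mod_cast hc.q_nonneg (L + 1)
    _ < q (L + 1) * E L + q L * E (L + 1) := by
        have hqL' : (0 : ℝ) < q L * E (L + 1) := mul_pos hqL (h.convergentError_pos hc hθ hirr _)
        linarith
    _ = 1 := hc.q_succ_mul_convergentError_add θ L

end IsGaussOrbit

theorem stmt_3_general (θ : ℝ) (hθ : θ ∈ Set.Ioo (0 : ℝ) 1) (hirr : Irrational θ)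
    (a : ℕ → ℕ) (x : ℕ → ℝ) (p q : ℕ → ℤ)
    (hx0 : x 0 = θ)
    (hgauss : ∀ k, ((a (k + 1) : ℤ) = ⌊1 / x k⌋ ∧ x (k + 1) = Int.fract (1 / x k)))
    (hp0 : p 0 = 0) (hp1 : p 1 = 1) (hq0 : q 0 = 1) (hq1 : q 1 = (a 1 : ℤ))
    (hp : ∀ k, p (k + 2) = (a (k + 2) : ℤ) * p (k + 1) + p k)
    (hq : ∀ k, q (k + 2) = (a (k + 2) : ℤ) * q (k + 1) + q k)
    (l : ℕ → ℕ)
    (ε : ℝ)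
    (hdom : ∀ n, ∀ m ≤ l n, (a (l n + 1) : ℝ) ≥ ε * ((a (m + 1) : ℝ) + 2))
    (r : ℕ → ℤ) (hr : ∀ n, r n = q (l n)) :
    ∀ n : ℕ, ∀ c : ℝ, 0 < c → ∀ k : ℤ, 1 ≤ k → k < r n →
      |(k : ℝ) * θ - round ((k : ℝ) * θ)| < c * |(r n : ℝ) * θ - round ((r n : ℝ) * θ)| →
      (k : ℝ) ≥ (ε / c) * (r n : ℝ) := by
  have hg : IsGaussOrbit θ a x := ⟨hx0, fun k ↦ (hgauss k).1, fun k ↦ (hgauss k).2⟩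
  have hc : IsConvergentSeq a p q := ⟨hp0, hp1, hq0, hq1, hp, hq⟩
  intro n c hc0 k hk1 hkr hlt
  rw [hr n] at hkr hlt ⊢
  obtain ⟨m, hmL, hmk, hkm⟩ := exists_le_lt_succ q (hq0 ▸ hk1) hkr
  set A : ℝ := a (m + 1) + 2
  set D := |(q (l n) : ℝ) * θ - round ((q (l n) : ℝ) * θ)|
  have hA : 0 < A := by positivity
  have hlow : 1 < A * k * (c * D) := by
    have hk : (0 : ℝ) < A * k := mul_pos hA (Int.cast_pos.2 hk1)
    exact (hg.one_lt_mul_abs_sub_round hc hθ hirr hmk hkm).trans (mul_lt_mul_of_pos_left hlt hk)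
  have hup : ε * A * q (l n) * D < 1 := by
    refine lt_of_le_of_lt ?_ (hg.a_mul_q_mul_abs_sub_round_lt hc hθ hirr (l n))
    have hqD : (0 : ℝ) ≤ q (l n) * D :=
      mul_nonneg (by exact_mod_cast hc.q_nonneg _) (abs_nonneg _)
    nlinarith [hdom n m hmL.le]
  have hAD : A * D * (ε * q (l n)) < A * D * (k * c) :=
    calc A * D * (ε * q (l n)) = ε * A * q (l n) * D := by ring
      _ < A * k * (c * D) := hup.trans hlow
      _ = A * D * (k * c) := by ring
  rw [ge_iff_le, div_mul_eq_mul_div, div_le_iff₀ hc0]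
  exact (lt_of_mul_lt_mul_left hAD (mul_nonneg hA.le (abs_nonneg _))).le

/-- Let `θ ∈ (0,1)` be irrational with continued fraction expansion
`θ = [0; a_1, a_2, …]` (encoded via the Gauss map `x_{k+1} = fract (1/x_k)`,
`a_{k+1} = ⌊1/x_k⌋`) and convergents `p_k/q_k` (given by the standard recurrences).
Suppose `(ℓ_n)` is strictly increasing, `ε > 0` and `a_{ℓ_n+1} ≥ ε·(a_{m+1}+2)`
for all `n` and all `m ≤ ℓ_n`, and set `r_n := q_{ℓ_n}`.  Then for every `n`, every
`c > 0` and every integer `q` with `1 ≤ q < r_n`, if `‖qθ‖ < c·‖r_nθ‖` then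
`q ≥ (ε/c)·r_n`.  Here `‖x‖ = |x - round x|` is the distance to the nearest integer. -/
theorem stmt_3 (θ : ℝ) (hθ : θ ∈ Set.Ioo (0 : ℝ) 1) (hirr : Irrational θ)
    (a : ℕ → ℕ) (x : ℕ → ℝ) (p q : ℕ → ℤ)
    (hx0 : x 0 = θ)
    (hgauss : ∀ k, ((a (k + 1) : ℤ) = ⌊1 / x k⌋ ∧ x (k + 1) = Int.fract (1 / x k)))
    (hp0 : p 0 = 0) (hp1 : p 1 = 1) (hq0 : q 0 = 1) (hq1 : q 1 = (a 1 : ℤ))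
    (hp : ∀ k, p (k + 2) = (a (k + 2) : ℤ) * p (k + 1) + p k)
    (hq : ∀ k, q (k + 2) = (a (k + 2) : ℤ) * q (k + 1) + q k)
    (l : ℕ → ℕ) (hl : StrictMono l)
    (ε : ℝ) (hε : 0 < ε)
    (hdom : ∀ n, ∀ m ≤ l n, (a (l n + 1) : ℝ) ≥ ε * ((a (m + 1) : ℝ) + 2))
    (r : ℕ → ℤ) (hr : ∀ n, r n = q (l n)) :
    ∀ n : ℕ, ∀ c : ℝ, 0 < c → ∀ k : ℤ, 1 ≤ k → k < r n →
      |(k : ℝ) * θ - round ((k : ℝ) * θ)| < c * |(r n : ℝ) * θ - round ((r n : ℝ) * θ)| →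
      (k : ℝ) ≥ (ε / c) * (r n : ℝ) :=
  stmt_3_general θ hθ hirr a x p q hx0 hgauss hp0 hp1 hq0 hq1 hp hq l ε hdom r hr
end

section
/- Let λ, a ∈ ℂ with a ≠ 0, 0 < |λ| < 1, λ^n ∉ ℝ for all integers n > 0, and u_m ≠ 0 for all m ∈ ℕ. Let (r_n)_{n≥0} be a sequence of positive integers such that {r_n·θ} = ‖r_n·θ‖ < 1/4 for all n and ‖r_n·θ‖ → 0 as n → ∞. For each n let Δ_n := { m ∈ ℕ : w_{n,m} ≠ 0 }. Then min Δ_n → ∞ as n → ∞; that is, for every M ∈ ℕ there exists N such that for all n ≥ N, every m ∈ Δ_n satisfies m > M. -/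
/-!
Since `λ^r` and its conjugate are the roots of `X² + a_r X + b_r`, the sequence `u_m = 2 Re(a λ^m)`
satisfies `u_{m+2r} + a_r u_{m+r} + b_r u_m = 0`. When `‖rθ‖ < 1/4`, `λ^r` lies in the open right
half-plane, so `a_r < 0 < b_r`; then, if `u_{m+2r}` and `u_m` have the same sign, the recurrence
forces `u_{m+r}` to share it and survives taking absolute values, i.e. `w_{r,m} = 0`.
As `‖r_nθ‖ → 0`, `λ^{2r_n} / |λ|^{2r_n} → 1`, so for each fixed `m` the sign of `u_{m+2r_n}`
is eventually that of `u_m`.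
-/

open Complex Filter Topology
open scoped Real

lemma abs_add_mul_abs_add_mul_abs_eq_zero {A B C p q : ℝ} (h : A + p * B + q * C = 0)
    (hp : p < 0) (hq : 0 < q) (hAC : 0 < A * C) : |A| + p * |B| + q * |C| = 0 := by
  rcases pos_and_pos_or_neg_and_neg_of_mul_pos hAC with ⟨hA, hC⟩ | ⟨hA, hC⟩
  · have hB : 0 < B := by nlinarith
    rwa [abs_of_pos hA, abs_of_pos hB, abs_of_pos hC]
  · have hB : B < 0 := by nlinarith
    rw [abs_of_neg hA, abs_of_neg hB, abs_of_neg hC]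
    linarith

lemma Complex.re_mul_sq (y w : ℂ) :
    (y * w ^ 2).re = 2 * w.re * (y * w).re - normSq w * y.re := by
  simp only [sq, mul_re, mul_im, normSq_apply]
  ring

lemma Complex.exp_two_pi_mul_I_mul_sub_intCast (t : ℂ) (k : ℤ) :
    exp (2 * π * I * (t - k)) = exp (2 * π * I * t) := by
  rw [mul_sub, exp_sub, mul_comm _ (k : ℂ), exp_int_mul_two_pi_mul_I, div_one]

lemma Complex.exp_two_pi_mul_I_mul_sub_round (t : ℝ) :
    exp (2 * π * I * (t - round t : ℝ)) = exp (2 * π * I * t) := by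
  push_cast
  exact exp_two_pi_mul_I_mul_sub_intCast _ _

lemma Complex.tendsto_exp_two_pi_mul_I_of_tendsto_abs_sub_round {ι : Type*} {l : Filter ι}
    {t : ι → ℝ} (ht : Tendsto (fun i => |t i - round (t i)|) l (𝓝 0)) :
    Tendsto (fun i => exp (2 * π * I * t i)) l (𝓝 1) := by
  have hcont : Continuous fun s : ℝ => exp (2 * π * I * s) := by fun_prop
  simpa only [Function.comp_def, exp_two_pi_mul_I_mul_sub_round, ofReal_zero, mul_zero,
    exp_zero] using (hcont.tendsto 0).comp ((tendsto_zero_iff_abs_tendsto_zero _).mpr ht)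

lemma Complex.re_exp_two_pi_mul_I_pos {t : ℝ} (ht : |t - round t| < 1 / 4) :
    0 < (exp (2 * π * I * t)).re := by
  obtain ⟨hlo, hhi⟩ := abs_lt.mp ht
  rw [← exp_two_pi_mul_I_mul_sub_round,
    show 2 * π * I * (t - round t : ℝ) = (2 * π * (t - round t) : ℝ) * I by push_cast; ring,
    exp_ofReal_mul_I_re]
  apply Real.cos_pos_of_mem_Ioo
  constructor <;> nlinarith [Real.pi_pos]

section Polar

variable {z : ℂ} {θ : ℝ}

lemma pow_eq_norm_pow_mul_exp (hz : z = ‖z‖ * exp (2 * π * I * θ)) (k : ℕ) :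
    z ^ k = ‖z‖ ^ k * exp (2 * π * I * (k * θ : ℝ)) := by
  conv_lhs => rw [hz, mul_pow, ← Complex.exp_nat_mul]
  push_cast
  ring_nf

lemma re_pow_pos_of_abs_sub_round_lt (hz : z = ‖z‖ * exp (2 * π * I * θ)) (hz0 : 0 < ‖z‖)
    {k : ℕ} (hk : |k * θ - round (k * θ)| < 1 / 4) : 0 < (z ^ k).re := by
  rw [pow_eq_norm_pow_mul_exp hz, ← ofReal_pow, re_ofReal_mul]
  exact mul_pos (pow_pos hz0 k) (re_exp_two_pi_mul_I_pos hk)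

lemma eventually_re_mul_pow_two_mul_mul_re_pos (hz : z = ‖z‖ * exp (2 * π * I * θ))
    (hz0 : 0 < ‖z‖) {r : ℕ → ℕ}
    (hr : Tendsto (fun n => |r n * θ - round (r n * θ)|) atTop (𝓝 0)) {y : ℂ} (hy : y.re ≠ 0) :
    ∀ᶠ n in atTop, 0 < (y * z ^ (2 * r n)).re * y.re := by
  have hlim : Tendsto (fun n => (y * exp (2 * π * I * (r n * θ : ℝ)) ^ 2).re * y.re) atTop
      (𝓝 (y.re * y.re)) := by
    have hcont : Continuous fun c : ℂ => (y * c ^ 2).re * y.re := by fun_prop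
    simpa only [Function.comp_def, one_pow, mul_one] using
      (hcont.tendsto 1).comp (tendsto_exp_two_pi_mul_I_of_tendsto_abs_sub_round hr)
  filter_upwards [hlim.eventually_const_lt (mul_self_pos.2 hy)] with n hn
  rw [pow_mul', pow_eq_norm_pow_mul_exp hz, mul_pow, ← pow_mul, ← ofReal_pow, mul_left_comm,
    re_ofReal_mul, mul_assoc]
  exact mul_pos (pow_pos hz0 _) hn

end Polar

theorem stmt_5_general (lam a : ℂ) (θ : ℝ)
    (h0 : 0 < ‖lam‖)
    (hθ : lam = (‖lam‖ : ℂ) * Complex.exp (2 * Real.pi * Complex.I * θ))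
    (u : ℕ → ℝ) (hu : ∀ m, (u m : ℂ) = a * lam ^ m + starRingEnd ℂ (a * lam ^ m))
    (hune : ∀ m, u m ≠ 0)
    (r : ℕ → ℕ)
    (hsmall : ∀ n, |(r n : ℝ) * θ - round ((r n : ℝ) * θ)| < 1 / 4)
    (hto0 : Filter.Tendsto (fun n => |(r n : ℝ) * θ - round ((r n : ℝ) * θ)|)
      Filter.atTop (nhds 0))
    (ar br : ℕ → ℝ)
    (har : ∀ n, (ar n : ℂ) = -(lam ^ (r n) + starRingEnd ℂ (lam ^ (r n))))
    (hbr : ∀ n, br n = ‖lam‖ ^ (2 * r n))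
    (w : ℕ → ℕ → ℝ)
    (hw : ∀ n m, w n m = |u (m + 2 * r n)| + ar n * |u (m + r n)| + br n * |u m|) :
    ∀ M : ℕ, ∃ N : ℕ, ∀ n ≥ N, ∀ m : ℕ, w n m ≠ 0 → m > M := by
  have hu_re (m : ℕ) : u m = 2 * (a * lam ^ m).re := by
    exact_mod_cast (hu m).trans (add_conj _)
  have har_re (n : ℕ) : ar n = -(2 * (lam ^ r n).re) := by
    exact_mod_cast (har n).trans (congrArg Neg.neg (add_conj _))
  have hbr_normSq (n : ℕ) : br n = normSq (lam ^ r n) := by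
    rw [hbr, normSq_eq_norm_sq, norm_pow, ← pow_mul, mul_comm]
  have hrec (n m : ℕ) : u (m + 2 * r n) + ar n * u (m + r n) + br n * u m = 0 := by
    rw [hu_re, hu_re, hu_re, har_re, hbr_normSq, pow_add, pow_add, pow_mul', ← mul_assoc a,
      ← mul_assoc a, re_mul_sq]
    ring
  have hsign (m : ℕ) : ∀ᶠ n in atTop, 0 < u (m + 2 * r n) * u m := by
    have hy : (a * lam ^ m).re ≠ 0 := fun h => hune m (by rw [hu_re, h, mul_zero])
    filter_upwards [eventually_re_mul_pow_two_mul_mul_re_pos hθ h0 hto0 hy] with n hn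
    rw [hu_re, hu_re, pow_add, ← mul_assoc a]
    linarith
  intro M
  obtain ⟨N, hN⟩ := eventually_atTop.mp ((Finset.range (M + 1)).eventually_all.mpr
    fun m _ => hsign m)
  refine ⟨N, fun n hn m hwm => not_le.mp fun hmM => hwm ?_⟩
  rw [hw]
  refine abs_add_mul_abs_add_mul_abs_eq_zero (hrec n m) ?_ (hbr n ▸ pow_pos h0 _)
    (hN n hn m (Finset.mem_range.mpr (Nat.lt_succ_of_le hmM)))
  rw [har_re, neg_lt_zero]
  exact mul_pos two_pos (re_pow_pos_of_abs_sub_round_lt hθ h0 (hsmall n))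

/-- With `u_m = a·λ^m + conj(a·λ^m)` (all nonzero), `θ` the normalised
argument of `λ`, and a sequence `(r_n)` of positive integers with `{r_nθ} = ‖r_nθ‖ < 1/4`
and `‖r_nθ‖ → 0`, setting `w_{n,m} = |u_{m+2r_n}| + a_{r_n}|u_{m+r_n}| + b_{r_n}|u_m|`
and `Δ_n = {m : w_{n,m} ≠ 0}`, we have `min Δ_n → ∞`: for every `M` there is `N` such
that for all `n ≥ N` every `m ∈ Δ_n` satisfies `m > M`. -/
theorem stmt_5 (lam a : ℂ) (θ : ℝ)
    (ha0 : a ≠ 0) (h0 : 0 < ‖lam‖) (h1 : ‖lam‖ < 1)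
    (hθmem : θ ∈ Set.Ico (0 : ℝ) 1)
    (hθ : lam = (‖lam‖ : ℂ) * Complex.exp (2 * Real.pi * Complex.I * θ))
    (hreal : ∀ n : ℕ, 0 < n → lam ^ n ∉ Set.range ((↑) : ℝ → ℂ))
    (u : ℕ → ℝ) (hu : ∀ m, (u m : ℂ) = a * lam ^ m + starRingEnd ℂ (a * lam ^ m))
    (hune : ∀ m, u m ≠ 0)
    (r : ℕ → ℕ) (hrpos : ∀ n, 0 < r n)
    (hfract : ∀ n, Int.fract ((r n : ℝ) * θ) = |(r n : ℝ) * θ - round ((r n : ℝ) * θ)|)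
    (hsmall : ∀ n, |(r n : ℝ) * θ - round ((r n : ℝ) * θ)| < 1 / 4)
    (hto0 : Filter.Tendsto (fun n => |(r n : ℝ) * θ - round ((r n : ℝ) * θ)|)
      Filter.atTop (nhds 0))
    (ar br : ℕ → ℝ)
    (har : ∀ n, (ar n : ℂ) = -(lam ^ (r n) + starRingEnd ℂ (lam ^ (r n))))
    (hbr : ∀ n, br n = ‖lam‖ ^ (2 * r n))
    (w : ℕ → ℕ → ℝ)
    (hw : ∀ n m, w n m = |u (m + 2 * r n)| + ar n * |u (m + r n)| + br n * |u m|) :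
    ∀ M : ℕ, ∃ N : ℕ, ∀ n ≥ N, ∀ m : ℕ, w n m ≠ 0 → m > M :=
  stmt_5_general lam a θ h0 hθ u hu hune r hsmall hto0 ar br har hbr w hw
end

section
/- Let λ, a ∈ ℂ with a ≠ 0, 0 < |λ| < 1, λ^n ∉ ℝ for all integers n > 0, and u_m ≠ 0 for all m ∈ ℕ. Let (r_n)_{n≥0} be a sequence of positive integers such that {r_n·θ} = ‖r_n·θ‖ < 1/4 for all n, and suppose there exists ε > 0 such that for all n, all real c > 0, and all integers q with 1 ≤ q < r_n: ‖q·θ‖ < c·‖r_n·θ‖ implies q ≥ (ε/c)·r_n. For each n let Δ_n := { m ∈ ℕ : w_{n,m} ≠ 0 }. Then there exists a constant C > 0 such that for all n, any two distinct elements m < m' of Δ_n satisfy m' − m ≥ C·r_n. -/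
/-!
Write `u m = 2‖a‖‖λ‖^m cos(arg a + 2πmθ)`. For fixed `r`, the roots of `X² + a_r X + b_r` are
`λ^r` and its conjugate, so `u (m + 2r) + a_r u (m + r) + b_r u m = 0`; if `u m`, `u (m + r)`,
`u (m + 2r)` share a sign, `w_{n,m}` is `±` this combination and vanishes. Hence `w_{n,m} ≠ 0`
forces the cosine to change sign across a step of `r_n`, a phase shift of `2π‖r_nθ‖` modulo `2π`,
so `2mθ + (arg a/π - 1/2)` lies within `4‖r_nθ‖` of an integer. For two such `m < m'` this gives
`‖2(m' - m)θ‖ < 8‖r_nθ‖`, and the Diophantine hypothesis with `c = 8` yields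
`m' - m ≥ (ε/16) r_n` unless already `2(m' - m) ≥ r_n`.
-/

section Trigonometry

open Real

theorem Real.exists_abs_sub_lt_of_cos_mul_cos_add_neg {y t : ℝ} (h : cos y * cos (y + t) < 0) :
    ∃ j : ℤ, |y - (2 * j + 1) * π / 2| < |t| := by
  have h0 : (0 : ℝ) ∈ Set.uIcc (cos y) (cos (y + t)) := by
    rcases lt_or_ge (cos y) 0 with hy | hy
    · exact Set.mem_uIcc.2 (Or.inl ⟨hy.le, by nlinarith⟩)
    · exact Set.mem_uIcc.2 (Or.inr ⟨by nlinarith, hy⟩)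
  obtain ⟨z, hz, hz0⟩ := intermediate_value_uIcc continuous_cos.continuousOn h0
  have hzy : z ≠ y + t := by rintro rfl; simp [hz0] at h
  obtain ⟨j, rfl⟩ := cos_eq_zero_iff.1 hz0
  refine ⟨j, abs_sub_lt_iff.2 ?_⟩
  rcases Set.mem_uIcc.1 hz with ⟨h1, h2⟩ | ⟨h1, h2⟩
  · have := lt_of_le_of_ne h2 hzy
    constructor <;> linarith [le_abs_self t]
  · have := lt_of_le_of_ne' h1 hzy
    constructor <;> linarith [neg_le_abs t]

theorem Real.exists_abs_sub_lt_of_cos_mul_cos_add_two_pi_mul_neg {y x : ℝ}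
    (h : cos y * cos (y + 2 * π * x) < 0) :
    ∃ j : ℤ, |y / π - 1 / 2 - j| < 2 * |x - round x| := by
  have hper : cos (y + 2 * π * x) = cos (y + 2 * π * (x - round x)) := by
    rw [← cos_add_int_mul_two_pi (y + 2 * π * (x - round x)) (round x)]; ring_nf
  rw [hper] at h
  obtain ⟨j, hj⟩ := exists_abs_sub_lt_of_cos_mul_cos_add_neg h
  refine ⟨j, ?_⟩
  have hdiv : y / π - 1 / 2 - j = (y - (2 * j + 1) * π / 2) / π := by
    field_simp; ring
  rw [hdiv, abs_div, abs_of_pos pi_pos, div_lt_iff₀ pi_pos]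
  rw [abs_mul, abs_of_pos (by positivity : (0 : ℝ) < 2 * π)] at hj
  linarith

end Trigonometry

theorem abs_add_mul_abs_add_mul_abs_eq_zero_s6 {α : Type*} [CommRing α] [LinearOrder α]
    [IsStrictOrderedRing α] {x y z p q : α} (hy : y ≠ 0) (hxy : 0 ≤ x * y) (hyz : 0 ≤ y * z)
    (h : z + p * y + q * x = 0) : |z| + p * |y| + q * |x| = 0 := by
  rcases hy.lt_or_gt with hy | hy
  · rw [abs_of_nonpos (nonpos_of_mul_nonneg_right hyz hy), abs_of_neg hy,
      abs_of_nonpos (nonpos_of_mul_nonneg_left hxy hy)]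
    linear_combination -h
  · rw [abs_of_nonneg (nonneg_of_mul_nonneg_right hyz hy), abs_of_pos hy,
      abs_of_nonneg (nonneg_of_mul_nonneg_left hxy hy)]
    exact h

namespace Complex

open Real

theorem re_mul_pow_of_eq_norm_mul_exp {lam : ℂ} {θ : ℝ}
    (hθ : lam = ‖lam‖ * exp (2 * π * I * θ)) (a : ℂ) (m : ℕ) :
    (a * lam ^ m).re = ‖a‖ * ‖lam‖ ^ m * Real.cos (arg a + 2 * π * m * θ) := by
  have hpolar : a * lam ^ m = ((‖a‖ * ‖lam‖ ^ m : ℝ) : ℂ) * exp ((arg a + 2 * π * m * θ : ℝ) * I) := by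
    conv_lhs => rw [← norm_mul_exp_arg_mul_I a, hθ, mul_pow, ← exp_nat_mul]
    push_cast
    rw [mul_mul_mul_comm, ← exp_add]
    ring_nf
  rw [hpolar, re_ofReal_mul, exp_ofReal_mul_I_re]

theorem re_mul_sq_sub_add (b μ : ℂ) :
    (b * μ ^ 2).re - 2 * μ.re * (b * μ).re + ‖μ‖ ^ 2 * b.re = 0 := by
  rw [Complex.sq_norm, normSq_apply]
  simp only [sq, mul_re, mul_im]
  ring

end Complex

section RealPartSequence

open Real

variable {lam a : ℂ} {u : ℕ → ℝ} (hu : ∀ m, (u m : ℂ) = a * lam ^ m + starRingEnd ℂ (a * lam ^ m))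
include hu

theorem eq_two_mul_re_of_eq_add_conj (m : ℕ) : u m = 2 * (a * lam ^ m).re := by
  exact_mod_cast (hu m).trans (Complex.add_conj _)

theorem add_two_mul_sub_add_eq_zero_of_eq_add_conj (r m : ℕ) :
    u (m + 2 * r) - 2 * (lam ^ r).re * u (m + r) + ‖lam‖ ^ (2 * r) * u m = 0 := by
  have key := Complex.re_mul_sq_sub_add (a * lam ^ m) (lam ^ r)
  rw [norm_pow, ← pow_mul, mul_comm r] at key
  simp only [eq_two_mul_re_of_eq_add_conj hu, pow_add, pow_mul', ← mul_assoc] at key ⊢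
  linear_combination 2 * key

theorem exists_abs_sub_lt_of_mul_add_neg {θ : ℝ}
    (hθ : lam = ‖lam‖ * Complex.exp (2 * π * Complex.I * θ)) {k r : ℕ}
    (h : u k * u (k + r) < 0) :
    ∃ j : ℤ, |2 * k * θ + (Complex.arg a / π - 1 / 2) - j| < 2 * |r * θ - round (r * θ)| := by
  simp only [eq_two_mul_re_of_eq_add_conj hu, Complex.re_mul_pow_of_eq_norm_mul_exp hθ] at h
  have hcos : cos (Complex.arg a + 2 * π * k * θ) *
      cos (Complex.arg a + 2 * π * k * θ + 2 * π * (r * θ)) < 0 := by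
    refine neg_of_mul_neg_right (a := 4 * ‖a‖ ^ 2 * ‖lam‖ ^ k * ‖lam‖ ^ (k + r)) ?_ (by positivity)
    rw [show Complex.arg a + 2 * π * ((k + r : ℕ) : ℝ) * θ
      = Complex.arg a + 2 * π * k * θ + 2 * π * (r * θ) by push_cast; ring] at h
    linear_combination h
  obtain ⟨j, hj⟩ := exists_abs_sub_lt_of_cos_mul_cos_add_two_pi_mul_neg hcos
  refine ⟨j, ?_⟩
  convert hj using 3
  field_simp
  ring

theorem exists_abs_sub_lt_of_abs_combination_ne_zero {θ : ℝ}
    (hθ : lam = ‖lam‖ * Complex.exp (2 * π * Complex.I * θ)) (hune : ∀ m, u m ≠ 0) {r m : ℕ}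
    (hw : |u (m + 2 * r)| + -(2 * (lam ^ r).re) * |u (m + r)| + ‖lam‖ ^ (2 * r) * |u m| ≠ 0) :
    ∃ j : ℤ, |2 * m * θ + (Complex.arg a / π - 1 / 2) - j| < 4 * |r * θ - round (r * θ)| := by
  have hδ := abs_nonneg ((r : ℝ) * θ - round ((r : ℝ) * θ))
  by_cases hm : u m * u (m + r) < 0
  · obtain ⟨j, hj⟩ := exists_abs_sub_lt_of_mul_add_neg hu hθ hm
    exact ⟨j, by linarith⟩
  -- if `u m`, `u (m + r)`, `u (m + 2 * r)` share a sign, the recurrence kills the combination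
  have hmr : u (m + r) * u (m + r + r) < 0 := by
    by_contra hmr
    refine hw (abs_add_mul_abs_add_mul_abs_eq_zero_s6 (hune _) (not_lt.1 hm) ?_ ?_)
    · rwa [not_lt, add_assoc, ← two_mul] at hmr
    · linear_combination add_two_mul_sub_add_eq_zero_of_eq_add_conj hu r m
  obtain ⟨j, hj⟩ := exists_abs_sub_lt_of_mul_add_neg hu hθ hmr
  refine ⟨j - 2 * round ((r : ℝ) * θ), ?_⟩
  calc |2 * m * θ + (Complex.arg a / π - 1 / 2) - ↑(j - 2 * round ((r : ℝ) * θ))|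
      = |(2 * ↑(m + r) * θ + (Complex.arg a / π - 1 / 2) - j) - 2 * (r * θ - round (r * θ))| := by
        push_cast; ring_nf
    _ ≤ |2 * ↑(m + r) * θ + (Complex.arg a / π - 1 / 2) - j| + |2 * (r * θ - round (r * θ))| :=
        abs_sub _ _
    _ < 4 * |r * θ - round (r * θ)| := by
        rw [abs_mul, abs_two]; linarith

end RealPartSequence

theorem min_mul_le_sub_of_abs_sub_lt {θ β ε : ℝ} {r m m' : ℕ} {j j' : ℤ}
    (hdio : ∀ c : ℝ, 0 < c → ∀ q : ℕ, 1 ≤ q → q < r →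
      |(q : ℝ) * θ - round ((q : ℝ) * θ)| < c * |(r : ℝ) * θ - round ((r : ℝ) * θ)| →
      (q : ℝ) ≥ (ε / c) * (r : ℝ))
    (hm : |2 * m * θ + β - j| < 4 * |r * θ - round (r * θ)|)
    (hm' : |2 * m' * θ + β - j'| < 4 * |r * θ - round (r * θ)|) (hlt : m < m') :
    min (1 / 2) (ε / 16) * r ≤ (m' : ℝ) - m := by
  obtain ⟨d, rfl⟩ := Nat.exists_eq_add_of_lt hlt
  have hgap : (↑(m + d + 1) : ℝ) - m = ↑(d + 1) := by push_cast; ring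
  rw [hgap]
  have hr : (0 : ℝ) ≤ r := r.cast_nonneg
  rcases lt_or_ge (2 * (d + 1)) r with hsmall | hlarge
  · have hnear : |(↑(2 * (d + 1)) : ℝ) * θ - round ((↑(2 * (d + 1)) : ℝ) * θ)|
        < 8 * |r * θ - round (r * θ)| := by
      refine (round_le _ (j' - j)).trans_lt ?_
      calc |(↑(2 * (d + 1)) : ℝ) * θ - ↑(j' - j)|
          = |(2 * ↑(m + d + 1) * θ + β - j') - (2 * m * θ + β - j)| := by push_cast; ring_nf
        _ ≤ |2 * ↑(m + d + 1) * θ + β - j'| + |2 * m * θ + β - j| := abs_sub _ _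
        _ < 8 * |r * θ - round (r * θ)| := by linarith
    have := hdio 8 (by norm_num) _ (by omega) hsmall hnear
    push_cast at this ⊢
    nlinarith [min_le_right (1 / 2 : ℝ) (ε / 16)]
  · have : (r : ℝ) ≤ 2 * ↑(d + 1) := by exact_mod_cast hlarge
    nlinarith [min_le_left (1 / 2 : ℝ) (ε / 16)]

theorem stmt_6_general (lam a : ℂ) (θ : ℝ)
    (hθ : lam = ((‖lam‖ : ℝ) : ℂ) * Complex.exp (2 * Real.pi * Complex.I * θ))
    (u : ℕ → ℝ) (hu : ∀ m, (u m : ℂ) = a * lam ^ m + starRingEnd ℂ (a * lam ^ m))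
    (hune : ∀ m, u m ≠ 0)
    (r : ℕ → ℕ)
    (ε : ℝ) (hε : 0 < ε)
    (hdio : ∀ n : ℕ, ∀ c : ℝ, 0 < c → ∀ q : ℕ, 1 ≤ q → q < r n →
      |(q : ℝ) * θ - round ((q : ℝ) * θ)| < c * |(r n : ℝ) * θ - round ((r n : ℝ) * θ)| →
      (q : ℝ) ≥ (ε / c) * (r n : ℝ))
    (ar br : ℕ → ℝ)
    (har : ∀ n, (ar n : ℂ) = -(lam ^ (r n) + starRingEnd ℂ (lam ^ (r n))))
    (hbr : ∀ n, br n = ‖lam‖ ^ (2 * r n))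
    (w : ℕ → ℕ → ℝ)
    (hw : ∀ n m, w n m = |u (m + 2 * r n)| + ar n * |u (m + r n)| + br n * |u m|) :
    ∃ C : ℝ, 0 < C ∧ ∀ n : ℕ, ∀ m m' : ℕ, w n m ≠ 0 → w n m' ≠ 0 → m < m' →
      (m' : ℝ) - (m : ℝ) ≥ C * (r n : ℝ) := by
  refine ⟨min (1 / 2) (ε / 16), by positivity, fun n m m' hm hm' hlt => ?_⟩
  have har' : ar n = -(2 * (lam ^ r n).re) := by
    exact_mod_cast (har n).trans (congrArg Neg.neg (Complex.add_conj _))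
  have hnear : ∀ k, w n k ≠ 0 → ∃ j : ℤ,
      |2 * k * θ + (Complex.arg a / Real.pi - 1 / 2) - j| < 4 * |r n * θ - round (r n * θ)| :=
    fun k hk ↦ exists_abs_sub_lt_of_abs_combination_ne_zero hu hθ hune (by rwa [hw, har', hbr] at hk)
  obtain ⟨j, hj⟩ := hnear m hm
  obtain ⟨j', hj'⟩ := hnear m' hm'
  exact min_mul_le_sub_of_abs_sub_lt (hdio n) hj hj' hlt

/-- Same setup as Statement 5, with instead a Diophantine hypothesis:
there is `ε > 0` such that for all `n`, all `c > 0` and all `1 ≤ q < r_n`,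
`‖qθ‖ < c·‖r_nθ‖` implies `q ≥ (ε/c)·r_n`.  Then there is a constant `C > 0`
such that any two distinct elements `m < m'` of `Δ_n = {m : w_{n,m} ≠ 0}`
satisfy `m' − m ≥ C·r_n`. -/
theorem stmt_6 (lam a : ℂ) (θ : ℝ)
    (ha0 : a ≠ 0) (h0 : 0 < ‖lam‖) (h1 : ‖lam‖ < 1)
    (hθmem : θ ∈ Set.Ico (0 : ℝ) 1)
    (hθ : lam = ((‖lam‖ : ℝ) : ℂ) * Complex.exp (2 * Real.pi * Complex.I * θ))
    (hreal : ∀ n : ℕ, 0 < n → lam ^ n ∉ Set.range ((↑) : ℝ → ℂ))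
    (u : ℕ → ℝ) (hu : ∀ m, (u m : ℂ) = a * lam ^ m + starRingEnd ℂ (a * lam ^ m))
    (hune : ∀ m, u m ≠ 0)
    (r : ℕ → ℕ) (hrpos : ∀ n, 0 < r n)
    (hfract : ∀ n, Int.fract ((r n : ℝ) * θ) = |(r n : ℝ) * θ - round ((r n : ℝ) * θ)|)
    (hsmall : ∀ n, |(r n : ℝ) * θ - round ((r n : ℝ) * θ)| < 1 / 4)
    (ε : ℝ) (hε : 0 < ε)
    (hdio : ∀ n : ℕ, ∀ c : ℝ, 0 < c → ∀ q : ℕ, 1 ≤ q → q < r n →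
      |(q : ℝ) * θ - round ((q : ℝ) * θ)| < c * |(r n : ℝ) * θ - round ((r n : ℝ) * θ)| →
      (q : ℝ) ≥ (ε / c) * (r n : ℝ))
    (ar br : ℕ → ℝ)
    (har : ∀ n, (ar n : ℂ) = -(lam ^ (r n) + starRingEnd ℂ (lam ^ (r n))))
    (hbr : ∀ n, br n = ‖lam‖ ^ (2 * r n))
    (w : ℕ → ℕ → ℝ)
    (hw : ∀ n m, w n m = |u (m + 2 * r n)| + ar n * |u (m + r n)| + br n * |u m|) :
    ∃ C : ℝ, 0 < C ∧ ∀ n : ℕ, ∀ m m' : ℕ, w n m ≠ 0 → w n m' ≠ 0 → m < m' →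
      (m' : ℝ) - (m : ℝ) ≥ C * (r n : ℝ) :=
  stmt_6_general lam a θ hθ u hu hune r ε hε hdio ar br har hbr w hw
end

section
/- Let d ≥ 1, let a_0, …, a_{d−1} ∈ ℝ, let ε ≥ 0, and let u_0, …, u_{d−1} ∈ ℝ be initial values. Let A be the d×d companion matrix whose first row is (a_0, a_1, …, a_{d−1}), whose subdiagonal entries are 1, and whose other entries are 0; set x_0 := (u_{d−1}, …, u_0)ᵀ, u^{(z)}_n := e_1ᵀ A^n x_0 and u^{(c)}_n := e_1ᵀ A^n e_1. Then the following are equivalent: (i) every real sequence (u_n)_{n≥0} that extends the given initial values u_0,…,u_{d−1} and satisfies −ε ≤ u_{n+d} − a_0·u_{n+d−1} − ⋯ − a_{d−1}·u_n ≤ ε for all n ∈ ℕ has u_n > 0 for all n ≥ d−1; (ii) for every n ∈ ℕ, u^{(z)}_n − ε·Σ_{k=0}^{n−1} |u^{(c)}_k| > 0. -/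
noncomputable def stSeq {d : ℕ} (A : Matrix (Fin d) (Fin d) ℝ)
    (x₀ e : Fin d → ℝ) (δ : ℕ → ℝ) : ℕ → Fin d → ℝ
  | 0 => x₀
  | n + 1 => A.mulVec (stSeq A x₀ e δ n) + δ n • e

lemma stSeq_closed {d : ℕ} (A : Matrix (Fin d) (Fin d) ℝ) (x₀ e : Fin d → ℝ)
    (δ : ℕ → ℝ) (n : ℕ) :
    stSeq A x₀ e δ n =
      (A ^ n).mulVec x₀ + ∑ k ∈ Finset.range n, δ k • (A ^ (n - 1 - k)).mulVec e := by
  induction n with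
  | zero => simp [stSeq]
  | succ n ih =>
    rw [stSeq, ih, Matrix.mulVec_add, Finset.sum_range_succ]
    have hsum : A.mulVec (∑ k ∈ Finset.range n, δ k • (A ^ (n - 1 - k)).mulVec e)
        = ∑ k ∈ Finset.range n, A.mulVec (δ k • (A ^ (n - 1 - k)).mulVec e) := by
      simpa only [Matrix.mulVecLin_apply] using
        map_sum A.mulVecLin (fun k => δ k • (A ^ (n - 1 - k)).mulVec e) (Finset.range n)
    rw [hsum]
    have h1 : A.mulVec ((A ^ n).mulVec x₀) = (A ^ (n + 1)).mulVec x₀ := by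
      rw [Matrix.mulVec_mulVec, ← pow_succ']
    have h2 : ∀ k ∈ Finset.range n, A.mulVec (δ k • (A ^ (n - 1 - k)).mulVec e)
        = δ k • (A ^ (n + 1 - 1 - k)).mulVec e := by
      intro k hk
      simp only [Finset.mem_range] at hk
      rw [Matrix.mulVec_smul, Matrix.mulVec_mulVec]
      have : A * A ^ (n - 1 - k) = A ^ (n + 1 - 1 - k) := by
        rw [← pow_succ']
        congr 1
        omega
      rw [this]
    rw [Finset.sum_congr rfl h2, h1]
    have h3 : δ n • (A ^ (n + 1 - 1 - n)).mulVec e = δ n • e := by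
      simp [Matrix.one_mulVec]
    rw [h3]
    abel

/-- For the companion matrix `A` of a nearly linear recurrence with
coefficients `a₀,…,a_{d−1}`, perturbation bound `ε ≥ 0` and initial values
`u₀,…,u_{d−1}`, with `x₀ = (u_{d−1},…,u₀)ᵀ`, `u^{(z)}_n = e₁ᵀA^n x₀` and
`u^{(c)}_n = e₁ᵀA^n e₁`, the following are equivalent:
(i) every real sequence extending the initial values and satisfying
`−ε ≤ u_{n+d} − a₀u_{n+d−1} − ⋯ − a_{d−1}u_n ≤ ε` for all `n` has `u_n > 0` for all
`n ≥ d−1`;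
(ii) `u^{(z)}_n − ε·Σ_{k<n}|u^{(c)}_k| > 0` for every `n`. -/
theorem stmt_12 (d : ℕ) (hd : 1 ≤ d) (a : Fin d → ℝ) (ε : ℝ) (hε : 0 ≤ ε)
    (u : Fin d → ℝ)
    (A : Matrix (Fin d) (Fin d) ℝ)
    (hA : ∀ i j : Fin d, A i j =
      if (i : ℕ) = 0 then a j else if (i : ℕ) = (j : ℕ) + 1 then 1 else 0)
    (x₀ : Fin d → ℝ)
    (hx₀ : ∀ i : Fin d, x₀ i = u ⟨d - 1 - (i : ℕ), by have := i.isLt; omega⟩) :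
    (∀ v : ℕ → ℝ, (∀ i : Fin d, v (i : ℕ) = u i) →
        (∀ n : ℕ,
          -ε ≤ v (n + d) - ∑ i : Fin d, a i * v (n + (d - 1 - (i : ℕ))) ∧
          v (n + d) - ∑ i : Fin d, a i * v (n + (d - 1 - (i : ℕ))) ≤ ε) →
        ∀ n : ℕ, d - 1 ≤ n → 0 < v n) ↔
    (∀ n : ℕ,
        0 < ((A ^ n).mulVec x₀) ⟨0, hd⟩ -
          ε * ∑ k ∈ Finset.range n, |(A ^ k) ⟨0, hd⟩ ⟨0, hd⟩|) := by
  classical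
  set j0 : Fin d := ⟨0, hd⟩ with hj0
  set e : Fin d → ℝ := fun i => if i = j0 then 1 else 0 with he
  set c : ℕ → ℝ := fun m => (A ^ m) j0 j0 with hc
  set z : ℕ → ℝ := fun n => ((A ^ n).mulVec x₀) j0 with hz
  -- mulVec computations for the companion matrix
  have hmul0 : ∀ w : Fin d → ℝ, A.mulVec w j0 = ∑ j : Fin d, a j * w j := by
    intro w
    simp only [Matrix.mulVec, dotProduct, hA]
    refine Finset.sum_congr rfl fun j _ => ?_
    norm_num [hj0]
  have hmulS : ∀ (w : Fin d → ℝ) (i : Fin d) (hi : (i : ℕ) ≠ 0),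
      A.mulVec w i = w ⟨(i : ℕ) - 1, by have := i.isLt; omega⟩ := by
    intro w i hi
    simp only [Matrix.mulVec, dotProduct, hA, hi, if_false]
    rw [Finset.sum_eq_single (⟨(i : ℕ) - 1, by have := i.isLt; omega⟩ : Fin d)]
    · rw [if_pos (by simp; omega)]
      ring
    · intro j _ hj
      rw [if_neg (by
        intro h
        apply hj
        apply Fin.ext
        simp
        omega)]
      ring
    · intro h
      exact absurd (Finset.mem_univ _) h
  -- value of mulVec e at j0
  have hsingle : ∀ M : Matrix (Fin d) (Fin d) ℝ, M.mulVec e j0 = M j0 j0 := by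
    intro M
    simp only [Matrix.mulVec, dotProduct, he, mul_ite, mul_one, mul_zero]
    simp
  -- scalar closed form
  have hclosed : ∀ (δ : ℕ → ℝ) (n : ℕ), stSeq A x₀ e δ n j0 =
      z n + ∑ k ∈ Finset.range n, δ k * c (n - 1 - k) := by
    intro δ n
    rw [stSeq_closed]
    simp only [Pi.add_apply, Finset.sum_apply, Pi.smul_apply, smul_eq_mul, hz, hc]
    congr 1
    exact Finset.sum_congr rfl fun k _ => by rw [hsingle]
  -- generic bridge: any solution of the perturbed recurrence matches stSeq
  have bridge : ∀ (v δ : ℕ → ℝ),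
      (∀ i : Fin d, v (i : ℕ) = u i) →
      (∀ k : ℕ, v (k + d) = (∑ i : Fin d, a i * v (k + (d - 1 - (i : ℕ)))) + δ k) →
      ∀ (n : ℕ) (i : Fin d), stSeq A x₀ e δ n i = v (n + (d - 1 - (i : ℕ))) := by
    intro v δ hinit hrec n
    induction n with
    | zero =>
      intro i
      have hlt : d - 1 - (i : ℕ) < d := by have := i.isLt; omega
      have h := hinit ⟨d - 1 - (i : ℕ), hlt⟩
      show x₀ i = _
      rw [hx₀]
      simpa using h.symm
    | succ n ih =>
      intro i
      have hst : stSeq A x₀ e δ (n + 1) i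
          = A.mulVec (stSeq A x₀ e δ n) i + δ n * e i := rfl
      by_cases hi : (i : ℕ) = 0
      · have hij : i = j0 := Fin.ext (by simp [hj0, hi])
        rw [hst, hij, hmul0]
        have hee : e j0 = 1 := by simp [he]
        rw [hee, mul_one]
        rw [Finset.sum_congr rfl fun j _ => by rw [ih j]]
        rw [← hrec n]
        congr 1
        show n + d = n + 1 + (d - 1 - 0)
        omega
      · rw [hst, hmulS _ _ hi]
        have hee : e i = 0 := by
          rw [he]
          simp only
          rw [if_neg (by intro h; apply hi; rw [h])]
        rw [hee, mul_zero, add_zero, ih ⟨(i : ℕ) - 1, by have := i.isLt; omega⟩]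
        congr 1
        have h1 := i.isLt
        show n + (d - 1 - ((i : ℕ) - 1)) = n + 1 + (d - 1 - (i : ℕ))
        omega
  -- reflected sum of absolute values
  have hreflect : ∀ n : ℕ, (∑ k ∈ Finset.range n, |c (n - 1 - k)|)
      = ∑ k ∈ Finset.range n, |c k| :=
    fun n => Finset.sum_range_reflect (fun k => |c k|) n
  constructor
  · -- (i) → (ii)
    intro H n
    set δ : ℕ → ℝ := fun k => if 0 ≤ c (n - 1 - k) then -ε else ε with hδ
    set v : ℕ → ℝ := fun m =>
      if h : m < d then u ⟨m, h⟩ else stSeq A x₀ e δ (m - (d - 1)) j0 with hv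
    have hinit : ∀ i : Fin d, v (i : ℕ) = u i := by
      intro i
      rw [hv]
      simp [i.isLt]
    -- bridge for the constructed v
    have hbr : ∀ (m : ℕ) (i : Fin d), stSeq A x₀ e δ m i = v (m + (d - 1 - (i : ℕ))) := by
      intro m
      induction m with
      | zero =>
        intro i
        have hlt : d - 1 - (i : ℕ) < d := by have := i.isLt; omega
        have hvv : v (0 + (d - 1 - (i : ℕ))) = u ⟨d - 1 - (i : ℕ), hlt⟩ := by
          rw [hv]; simp [hlt]
        rw [hvv]
        show x₀ i = _
        rw [hx₀]
      | succ m ih =>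
        intro i
        by_cases hi : (i : ℕ) = 0
        · have hij : i = j0 := Fin.ext (by simp [hj0, hi])
          have harg : m + 1 + (d - 1 - (i : ℕ)) = m + d := by
            rw [hi]; omega
          rw [harg, hij]
          have hnd : ¬ (m + d < d) := by omega
          have hsub : m + d - (d - 1) = m + 1 := by omega
          rw [hv]
          simp only [hnd, dif_neg, not_false_iff, hsub]
        · have hst : stSeq A x₀ e δ (m + 1) i
              = A.mulVec (stSeq A x₀ e δ m) i + δ m * e i := rfl
          rw [hst, hmulS _ _ hi]
          have hee : e i = 0 := by
            rw [he]
            simp only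
            rw [if_neg (by intro h; apply hi; rw [h])]
          rw [hee, mul_zero, add_zero, ih ⟨(i : ℕ) - 1, by have := i.isLt; omega⟩]
          congr 1
          have h1 := i.isLt
          show m + (d - 1 - ((i : ℕ) - 1)) = m + 1 + (d - 1 - (i : ℕ))
          omega
    -- recurrence for constructed v
    have hrec : ∀ k : ℕ,
        v (k + d) = (∑ i : Fin d, a i * v (k + (d - 1 - (i : ℕ)))) + δ k := by
      intro k
      have h1 : v (k + d) = stSeq A x₀ e δ (k + 1) j0 := by
        have hnd : ¬ (k + d < d) := by omega
        have hsub : k + d - (d - 1) = k + 1 := by omega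
        rw [hv]
        simp only [hnd, dif_neg, not_false_iff, hsub]
      rw [h1]
      have hst : stSeq A x₀ e δ (k + 1) j0
          = A.mulVec (stSeq A x₀ e δ k) j0 + δ k * e j0 := rfl
      rw [hst, hmul0]
      have hee : e j0 = 1 := by simp [he]
      rw [hee, mul_one]
      congr 1
      exact Finset.sum_congr rfl fun j _ => by rw [hbr k j]
    -- feed v to H
    have hbound : ∀ k : ℕ,
        -ε ≤ v (k + d) - ∑ i : Fin d, a i * v (k + (d - 1 - (i : ℕ))) ∧
        v (k + d) - ∑ i : Fin d, a i * v (k + (d - 1 - (i : ℕ))) ≤ ε := by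
      intro k
      have : v (k + d) - ∑ i : Fin d, a i * v (k + (d - 1 - (i : ℕ))) = δ k := by
        rw [hrec k]; ring
      rw [this, hδ]
      constructor <;> · simp only; split <;> linarith
    have hpos := H v hinit hbound (n + (d - 1)) (by omega)
    have hval : v (n + (d - 1)) = z n + ∑ k ∈ Finset.range n, δ k * c (n - 1 - k) := by
      have := hbr n j0
      have hj0n : ((j0 : Fin d) : ℕ) = 0 := rfl
      rw [hj0n] at this
      simp only [Nat.sub_zero] at this
      rw [← this, hclosed]
    have hterm : ∀ k ∈ Finset.range n, δ k * c (n - 1 - k) = -(ε * |c (n - 1 - k)|) := by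
      intro k _
      rw [hδ]
      simp only
      split
      · rw [abs_of_nonneg (by assumption)]; ring
      · rw [abs_of_neg (by linarith [not_le.mp (by assumption)])]
        ring
    rw [hval, Finset.sum_congr rfl hterm, Finset.sum_neg_distrib] at hpos
    rw [← Finset.mul_sum, hreflect] at hpos
    linarith
  · -- (ii) → (i)
    intro H v hinit hineq n hn
    set δ : ℕ → ℝ := fun k =>
      v (k + d) - ∑ i : Fin d, a i * v (k + (d - 1 - (i : ℕ))) with hδ
    have hrec : ∀ k : ℕ,
        v (k + d) = (∑ i : Fin d, a i * v (k + (d - 1 - (i : ℕ)))) + δ k := by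
      intro k; rw [hδ]; ring
    have hδb : ∀ k, |δ k| ≤ ε := by
      intro k
      rw [abs_le, hδ]
      exact hineq k
    set m : ℕ := n - (d - 1) with hm
    have hmn : n = m + (d - 1) := by omega
    have hval : v n = z m + ∑ k ∈ Finset.range m, δ k * c (m - 1 - k) := by
      have := bridge v δ hinit hrec m j0
      have hj0n : ((j0 : Fin d) : ℕ) = 0 := rfl
      rw [hj0n] at this
      simp only [Nat.sub_zero] at this
      rw [hmn, ← this, hclosed]
    have hterm : ∀ k ∈ Finset.range m,
        -(ε * |c (m - 1 - k)|) ≤ δ k * c (m - 1 - k) := by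
      intro k _
      have h1 : -|δ k * c (m - 1 - k)| ≤ δ k * c (m - 1 - k) := neg_abs_le _
      have h2 : |δ k * c (m - 1 - k)| ≤ ε * |c (m - 1 - k)| := by
        rw [abs_mul]
        exact mul_le_mul_of_nonneg_right (hδb k) (abs_nonneg _)
      linarith
    have hsum : -(ε * ∑ k ∈ Finset.range m, |c k|)
        ≤ ∑ k ∈ Finset.range m, δ k * c (m - 1 - k) := by
      have := Finset.sum_le_sum hterm
      rw [Finset.sum_neg_distrib, ← Finset.mul_sum, hreflect] at this
      linarith
    have hH := H m
    rw [hval]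
    have : z m = ((A ^ m).mulVec x₀) j0 := rfl
    simp only [hz, hc] at hH hsum ⊢
    linarith [hH, hsum]
end

section
/- Let a, λ ∈ ℂ with a ≠ 0, |λ| = 1, and λ^n ∉ ℝ for all integers n > 0. Then there exists δ > 0 such that |a·λ^n + conj(a·λ^n)| > δ for infinitely many n ∈ ℕ; consequently, the series Σ_{n=0}^∞ |a·λ^n + conj(a·λ^n)| diverges. -/
/-!
The `n`-th term is `2 |Re (a λ^n)|`. Since `λ` is not real, multiplication by `λ` genuinely rotates:
from `Re (λ z) = Re λ · Re z - Im λ · Im z` one gets `|Im λ| · ‖z‖ ≤ 3 · max (|Re z|, |Re (λ z)|)`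
when `‖λ‖ ≤ 1`. Applied to `z = a λ^N`, of norm `‖a‖`, one of any two consecutive terms is at least
`(2/3) ‖a‖ |Im λ|`, so the terms do not tend to `0`.
-/

open Filter ComplexConjugate

namespace Complex

theorem norm_add_conj (z : ℂ) : ‖z + conj z‖ = 2 * |z.re| := by
  rw [add_conj, norm_real, Real.norm_eq_abs, abs_mul, abs_two]

theorem abs_im_mul_norm_le_max_abs_re {lam : ℂ} (hlam : ‖lam‖ ≤ 1) (z : ℂ) :
    |lam.im| * ‖z‖ ≤ 3 * max |z.re| |(lam * z).re| := by
  have h_im : |lam.im| * |z.im| ≤ |lam.re| * |z.re| + |(lam * z).re| := by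
    rw [← abs_mul, ← abs_mul]
    calc |lam.im * z.im| = |lam.re * z.re - (lam * z).re| := by rw [mul_re, sub_sub_cancel]
      _ ≤ |lam.re * z.re| + |(lam * z).re| := abs_sub _ _
  have h_re : |lam.re| ≤ 1 := (abs_re_le_norm lam).trans hlam
  have h_im_le : |lam.im| ≤ 1 := (abs_im_le_norm lam).trans hlam
  have h_norm := norm_le_abs_re_add_abs_im z
  have h_max₁ := le_max_left |z.re| |(lam * z).re|
  have h_max₂ := le_max_right |z.re| |(lam * z).re|
  nlinarith [abs_nonneg lam.im, abs_nonneg lam.re, abs_nonneg z.re]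

theorem frequently_lt_norm_add_conj_mul_pow {a lam : ℂ} (ha : a ≠ 0) (hlam : ‖lam‖ = 1)
    (him : lam.im ≠ 0) :
    ∃ᶠ n in atTop, ‖a‖ * |lam.im| / 4 < ‖a * lam ^ n + conj (a * lam ^ n)‖ := by
  have hpos : 0 < ‖a‖ * |lam.im| := by positivity
  refine frequently_atTop.2 fun N => ?_
  have h_norm : ‖a * lam ^ N‖ = ‖a‖ := by rw [norm_mul, norm_pow, hlam, one_pow, mul_one]
  have key := abs_im_mul_norm_le_max_abs_re hlam.le (a * lam ^ N)
  rw [h_norm, show lam * (a * lam ^ N) = a * lam ^ (N + 1) by ring] at key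
  simp only [norm_add_conj]
  rcases le_max_iff.1 (show ‖a‖ * |lam.im| / 3 ≤ max |(a * lam ^ N).re| |(a * lam ^ (N + 1)).re| by
    linarith) with h | h
  · exact ⟨N, le_rfl, by linarith⟩
  · exact ⟨N + 1, N.le_succ, by linarith⟩

end Complex

theorem Real.not_summable_of_frequently_lt {f : ℕ → ℝ} {δ : ℝ} (hδ : 0 < δ)
    (hf : ∃ᶠ n in atTop, δ < f n) : ¬ Summable f := fun hsum =>
  let ⟨_, hlt, hgt⟩ := (hf.and_eventually ((tendsto_order.1 hsum.tendsto_atTop_zero).2 δ hδ)).exists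
  hlt.not_gt hgt

/-- Let `a, λ ∈ ℂ` with `a ≠ 0`, `|λ| = 1` and `λ^n ∉ ℝ` for all `n > 0`.
Then there is `δ > 0` with `|a·λ^n + conj(a·λ^n)| > δ` for infinitely many `n`;
consequently the series `Σ_n |a·λ^n + conj(a·λ^n)|` diverges. -/
theorem stmt_13 (a lam : ℂ) (ha : a ≠ 0) (hlam : ‖lam‖ = 1)
    (hreal : ∀ n : ℕ, 0 < n → lam ^ n ∉ Set.range ((↑) : ℝ → ℂ)) :
    (∃ δ : ℝ, 0 < δ ∧ ∀ N : ℕ, ∃ n : ℕ, N ≤ n ∧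
      ‖a * lam ^ n + starRingEnd ℂ (a * lam ^ n)‖ > δ) ∧
    ¬ Summable (fun n : ℕ => ‖a * lam ^ n + starRingEnd ℂ (a * lam ^ n)‖) := by
  have him : lam.im ≠ 0 := fun h => hreal 1 one_pos ⟨lam.re, by simp [Complex.ext_iff, h]⟩
  have hδ : 0 < ‖a‖ * |lam.im| / 4 := by positivity
  have hfreq := Complex.frequently_lt_norm_add_conj_mul_pow ha hlam him
  exact ⟨⟨_, hδ, frequently_atTop.1 hfreq⟩, Real.not_summable_of_frequently_lt hδ hfreq⟩
end
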